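/- Let 0 → C' → C → C'' → 0 be a short exact sequence of R-modules. (a) If C' and C'' are S-contramodules, then C is an S-contramodule. (b) If C is an S-contramodule, then C'' is S-h-reduced if and only if C' is an S-contramodule. -/

import Mathlib

open CategoryTheory

/-- `Ext^n_R(M, N)` for `R`-modules `M`, `N`. -/
noncomputable def extGroup (R : Type) [CommRing R] (M N : Type) [AddCommGroup M] [Module R M]
    [AddCommGroup N] [Module R N] (n : ℕ) : Type :=
  ((Ext R (ModuleCat R) n).obj (Opposite.op (ModuleCat.of R M))).obj (ModuleCat.of R N)

/-- An `R`-module `C` is S-h-reduced if `Hom_R(S⁻¹R, C) = 0`. -/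
def IsSHReduced (R : Type) [CommRing R] (S : Submonoid R)
    (C : Type) [AddCommGroup C] [Module R C] : Prop :=
  ∀ f : Localization S →ₗ[R] C, f = 0

/-- An `R`-module `C` is an S-contramodule if `Hom_R(S⁻¹R, C) = 0 = Ext^1_R(S⁻¹R, C)`. -/
def IsSContramodule (R : Type) [CommRing R] (S : Submonoid R)
    (C : Type) [AddCommGroup C] [Module R C] : Prop :=
  IsSHReduced R S C ∧ Subsingleton (extGroup R (Localization S) C 1)

/-!
Both conditions are vanishing conditions on `Ext^0(S⁻¹R, -) = Hom(S⁻¹R, -)` and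
`Ext^1(S⁻¹R, -)`, so everything is read off the long exact sequence
`0 → Hom(S⁻¹R, C') → Hom(S⁻¹R, C) → Hom(S⁻¹R, C'') → Ext^1(S⁻¹R, C') → Ext^1(S⁻¹R, C) → …`.
`Ext` is derived in the first argument, i.e. computed from a projective resolution `P` of
`S⁻¹R`, so this sequence is the homology sequence of
`0 → Hom(P, C') → Hom(P, C) → Hom(P, C'') → 0`, which is short exact degreewise because each
`Pₙ` is projective.
-/

open Limits Opposite

universe w v u

variable {R : Type w} [Ring R] {C : Type u} [Category.{v} C] [Abelian C] [Linear R C]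

namespace CategoryTheory

instance preservesFiniteLimits_linearYoneda_obj (Y : C) :
    PreservesFiniteLimits ((linearYoneda R C).obj Y) :=
  have : PreservesFiniteLimits ((linearYoneda R C).obj Y ⋙ forget _) :=
    (inferInstance : PreservesFiniteLimits (yoneda.obj Y))
  preservesFiniteLimits_of_reflects_of_preserves _ (forget _)

instance preservesFiniteColimits_linearYoneda_obj_rightOp (Y : C) :
    PreservesFiniteColimits ((linearYoneda R C).obj Y).rightOp :=
  preservesFiniteColimits_rightOp _

instance preservesFiniteLimits_linearCoyoneda_obj (P : Cᵒᵖ) :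
    PreservesFiniteLimits ((linearCoyoneda R C).obj P) :=
  have : PreservesFiniteLimits ((linearCoyoneda R C).obj P ⋙ forget _) :=
    (inferInstance : PreservesFiniteLimits (coyoneda.obj P))
  preservesFiniteLimits_of_reflects_of_preserves _ (forget _)

instance preservesEpimorphisms_linearCoyoneda_obj (P : C) [Projective P] :
    ((linearCoyoneda R C).obj (op P)).PreservesEpimorphisms :=
  have : ((linearCoyoneda R C).obj (op P) ⋙ forget _).PreservesEpimorphisms :=
    (Projective.projective_iff_preservesEpimorphisms_coyoneda_obj P).1 inferInstance
  Functor.preservesEpimorphisms_of_preserves_of_reflects _ (forget _)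

instance preservesFiniteColimits_linearCoyoneda_obj (P : C) [Projective P] :
    PreservesFiniteColimits ((linearCoyoneda R C).obj (op P)) :=
  have := Functor.preservesHomology_of_preservesEpis_and_kernels ((linearCoyoneda R C).obj (op P))
  Functor.preservesFiniteColimits_of_preservesHomology _

end CategoryTheory

namespace ChainComplex

variable (R) (K : ChainComplex C ℕ)

noncomputable def linearYonedaMap {Y₁ Y₂ : C} (w : Y₁ ⟶ Y₂) :
    K.linearYonedaObj R Y₁ ⟶ K.linearYonedaObj R Y₂ where
  f n := ModuleCat.ofHom (Linear.rightComp R _ w)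
  comm' i j _ := by ext (φ : K.X i ⟶ Y₁); exact (Category.assoc _ _ _).symm

noncomputable def linearYonedaShortComplex (S : ShortComplex C) :
    ShortComplex (CochainComplex (ModuleCat R) ℕ) where
  f := K.linearYonedaMap R S.f
  g := K.linearYonedaMap R S.g
  zero := by
    ext n (φ : K.X n ⟶ S.X₁)
    exact (Category.assoc _ _ _).trans (by rw [S.zero, comp_zero]; rfl)

variable {R K}

lemma linearYonedaShortComplex_shortExact [∀ n, Projective (K.X n)] {S : ShortComplex C}
    (hS : S.ShortExact) : (K.linearYonedaShortComplex R S).ShortExact := by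
  rw [HomologicalComplex.shortExact_iff_degreewise_shortExact]
  exact fun n ↦ hS.map_of_exact ((linearCoyoneda R C).obj (op (K.X n)))

end ChainComplex

variable [EnoughProjectives C]

variable (R) in
noncomputable def extZeroIso (X Y : C) :
    ((Ext R C 0).obj (op X)).obj Y ≅ ModuleCat.of R (X ⟶ Y) :=
  (((linearYoneda R C).obj Y).rightOp.leftDerivedZeroIsoSelf.app X).unop.symm

lemma CategoryTheory.ProjectiveResolution.isZero_ext_iff_exactAt {X : C}
    (P : ProjectiveResolution X) (n : ℕ) (Y : C) :
    IsZero (((Ext R C n).obj (op X)).obj Y) ↔ (P.complex.linearYonedaObj R Y).ExactAt n := by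
  rw [HomologicalComplex.exactAt_iff_isZero_homology, (P.isoExt n Y).isZero_iff]

namespace CategoryTheory.ShortComplex.ShortExact

variable {S : ShortComplex C} (X : C) (n : ℕ)

lemma isZero_ext_zero_X₁ (hS : S.ShortExact)
    (h₂ : IsZero (((Ext R C 0).obj (Opposite.op X)).obj S.X₂)) :
    IsZero (((Ext R C 0).obj (Opposite.op X)).obj S.X₁) := by
  have := hS.mono_f
  rw [(extZeroIso R X S.X₂).isZero_iff, ModuleCat.isZero_iff_subsingleton] at h₂
  rw [(extZeroIso R X S.X₁).isZero_iff, ModuleCat.isZero_iff_subsingleton]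
  exact ⟨fun φ ψ ↦ (cancel_mono S.f).1 (Subsingleton.elim (α := X ⟶ S.X₂) _ _)⟩

lemma isZero_ext_X₂ (hS : S.ShortExact)
    (h₁ : IsZero (((Ext R C n).obj (Opposite.op X)).obj S.X₁))
    (h₃ : IsZero (((Ext R C n).obj (Opposite.op X)).obj S.X₃)) :
    IsZero (((Ext R C n).obj (Opposite.op X)).obj S.X₂) := by
  let P := projectiveResolution X
  rw [P.isZero_ext_iff_exactAt] at h₁ h₃ ⊢
  exact (ChainComplex.linearYonedaShortComplex_shortExact hS).exactAt_X₂ n h₁ h₃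

lemma isZero_ext_succ_X₁ (hS : S.ShortExact)
    (h₃ : IsZero (((Ext R C n).obj (Opposite.op X)).obj S.X₃))
    (h₂ : IsZero (((Ext R C (n + 1)).obj (Opposite.op X)).obj S.X₂)) :
    IsZero (((Ext R C (n + 1)).obj (Opposite.op X)).obj S.X₁) := by
  let P := projectiveResolution X
  simp only [P.isZero_ext_iff_exactAt, HomologicalComplex.exactAt_iff_isZero_homology] at h₃ h₂ ⊢
  exact ((ChainComplex.linearYonedaShortComplex_shortExact hS).homology_exact₁ n (n + 1)
    rfl).isZero_X₂ (h₃.eq_of_src _ _) (h₂.eq_of_tgt _ _)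

lemma isZero_ext_X₃ (hS : S.ShortExact)
    (h₂ : IsZero (((Ext R C n).obj (Opposite.op X)).obj S.X₂))
    (h₁ : IsZero (((Ext R C (n + 1)).obj (Opposite.op X)).obj S.X₁)) :
    IsZero (((Ext R C n).obj (Opposite.op X)).obj S.X₃) := by
  let P := projectiveResolution X
  simp only [P.isZero_ext_iff_exactAt, HomologicalComplex.exactAt_iff_isZero_homology] at h₂ h₁ ⊢
  exact ((ChainComplex.linearYonedaShortComplex_shortExact hS).homology_exact₃ n (n + 1)
    rfl).isZero_X₂ (h₂.eq_of_src _ _) (h₁.eq_of_tgt _ _)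

end CategoryTheory.ShortComplex.ShortExact

section Localization

variable (R : Type) [CommRing R] (S : Submonoid R) (M : Type) [AddCommGroup M] [Module R M]

lemma isSHReduced_iff_isZero_ext : IsSHReduced R S M ↔
    IsZero (((Ext R (ModuleCat R) 0).obj (op (ModuleCat.of R (Localization S)))).obj
      (ModuleCat.of R M)) := by
  rw [(extZeroIso R _ _).isZero_iff, ModuleCat.isZero_iff_subsingleton,
    ModuleCat.homEquiv.subsingleton_congr, IsSHReduced, subsingleton_iff_forall_eq 0]

lemma isSContramodule_iff_isZero_ext : IsSContramodule R S M ↔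
    IsZero (((Ext R (ModuleCat R) 0).obj (op (ModuleCat.of R (Localization S)))).obj
      (ModuleCat.of R M)) ∧
    IsZero (((Ext R (ModuleCat R) 1).obj (op (ModuleCat.of R (Localization S)))).obj
      (ModuleCat.of R M)) := by
  rw [IsSContramodule, isSHReduced_iff_isZero_ext]
  exact and_congr_right' ModuleCat.isZero_iff_subsingleton.symm

end Localization

theorem contramodule_short_exact
    (R : Type) [CommRing R] (S : Submonoid R)
    (C' C C'' : Type) [AddCommGroup C'] [Module R C'] [AddCommGroup C] [Module R C]
    [AddCommGroup C''] [Module R C'']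
    (i : C' →ₗ[R] C) (p : C →ₗ[R] C'')
    (hi : Function.Injective i) (hp : Function.Surjective p)
    (hexact : LinearMap.range i = LinearMap.ker p) :
    (IsSContramodule R S C' → IsSContramodule R S C'' → IsSContramodule R S C) ∧
    (IsSContramodule R S C →
      (IsSHReduced R S C'' ↔ IsSContramodule R S C')) := by
  have hexact' : Function.Exact i p := LinearMap.exact_iff.2 hexact.symm
  let T := ShortComplex.moduleCatMk i p hexact'.linearMap_comp_eq_zero
  have hT : T.ShortExact := ModuleCat.shortComplex_shortExact T hexact' hi hp
  let X := ModuleCat.of R (Localization S)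
  simp only [isSContramodule_iff_isZero_ext, isSHReduced_iff_isZero_ext]
  constructor
  · rintro ⟨h'₀, h'₁⟩ ⟨h''₀, h''₁⟩
    exact ⟨hT.isZero_ext_X₂ X 0 h'₀ h''₀, hT.isZero_ext_X₂ X 1 h'₁ h''₁⟩
  · rintro ⟨h₀, h₁⟩
    exact ⟨fun h''₀ ↦ ⟨hT.isZero_ext_zero_X₁ X h₀, hT.isZero_ext_succ_X₁ X 0 h''₀ h₁⟩,
      fun ⟨_, h'₁⟩ ↦ hT.isZero_ext_X₃ X 0 h₀ h'₁⟩
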